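/- Let G = ℤ/Nℤ, S ⊆ G, Ω ⊆ ℤ/Nℤ, α ∈ (0,1), and suppose p : G → ℂ has p̂ supported in Ω and a unimodular λ : S → ℂ satisfies |p − λ| < α on S and |p| < 1 − α on G∖S. If z : G → ℂ satisfies ẑ|_Ω = 0, λ·conj(z) = |z| on S, and z does not vanish identically on S, then (1−α)∑_S |z| < |∑_S p·conj(z)| and |∑_{G∖S} p·conj(z)| ≤ (1−α)∑_{G∖S}|z|, hence ∑_S |z| < ∑_{G∖S} |z|. -/

import Mathlib

open Finset Complex

/-- Discrete Fourier transform on `ℤ/Nℤ`. -/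
noncomputable def dft (N : ℕ) [NeZero N] (z : ZMod N → ℂ) (ω : ZMod N) : ℂ :=
  (N : ℂ) ^ (-(1:ℂ)/2) *
    ∑ t : ZMod N, z t * Complex.exp (-2 * Real.pi * Complex.I * (ω.val * t.val) / N)

/-!
Parseval's identity on `ℤ/Nℤ` turns the disjointness of the Fourier supports of `p` and `z` into
`∑_G p·conj z = 0`, so the sums of `p·conj z` over `S` and over its complement have the same norm.
On `S`, `λ·conj z = |z|` makes that sum `∑_S |z|` plus an error of size `< α ∑_S |z|`; off `S`
it is at most `(1 − α) ∑_{G∖S} |z|`. Comparing the two bounds and cancelling `1 − α > 0` gives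
the claim.
-/

open ComplexConjugate
open scoped ZMod

namespace ZMod

variable {N : ℕ} [NeZero N]

lemma sum_dft_mul_conj_dft (f g : ZMod N → ℂ) :
    ∑ k, 𝓕 f k * conj (𝓕 g k) = N * ∑ j, f j * conj (g j) := by
  have conj_dft (k : ZMod N) : conj (𝓕 g k) = ∑ j, stdAddChar (j * k) * conj (g j) := by
    simp only [dft_apply, smul_eq_mul, map_sum, map_mul, ← AddChar.map_neg_eq_conj, neg_neg]
  have dft_dft_neg (j : ZMod N) : ∑ k, 𝓕 f k * stdAddChar (j * k) = N * f j := by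
    have := congrFun (dft_dft f) (-j)
    rw [dft_apply, neg_neg, smul_eq_mul] at this
    simpa [mul_comm] using this
  calc ∑ k, 𝓕 f k * conj (𝓕 g k)
      = ∑ j, (∑ k, 𝓕 f k * stdAddChar (j * k)) * conj (g j) := by
        simp_rw [conj_dft, mul_sum, sum_mul, mul_assoc]
        exact sum_comm
    _ = N * ∑ j, f j * conj (g j) := by
        simp_rw [dft_dft_neg, mul_sum, mul_assoc]

lemma sum_mul_conj_eq_zero_of_dft_eq_zero {f g : ZMod N → ℂ} {Ω : Set (ZMod N)}
    (hf : ∀ k ∉ Ω, 𝓕 f k = 0) (hg : ∀ k ∈ Ω, 𝓕 g k = 0) :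
    ∑ j, f j * conj (g j) = 0 := by
  have hfg : ∑ k, 𝓕 f k * conj (𝓕 g k) = 0 := sum_eq_zero fun k _ ↦ by
    by_cases hk : k ∈ Ω
    · simp [hg k hk]
    · simp [hf k hk]
  rw [sum_dft_mul_conj_dft] at hfg
  exact (mul_eq_zero.1 hfg).resolve_left (Nat.cast_ne_zero.2 (NeZero.ne N))

lemma stdAddChar_neg_mul (t ω : ZMod N) :
    stdAddChar (-(t * ω)) = exp (-2 * Real.pi * I * (ω.val * t.val) / N) := by
  have : -(t * ω) = ((-(ω.val * t.val : ℤ) : ℤ) : ZMod N) := by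
    push_cast
    rw [natCast_zmod_val, natCast_zmod_val, mul_comm]
  rw [this, stdAddChar_coe]
  push_cast
  ring_nf

end ZMod

lemma dft_eq_cpow_mul (N : ℕ) [NeZero N] (f : ZMod N → ℂ) (ω : ZMod N) :
    dft N f ω = (N : ℂ) ^ (-(1:ℂ)/2) * 𝓕 f ω := by
  simp only [dft, ZMod.dft_apply, ← ZMod.stdAddChar_neg_mul, smul_eq_mul, mul_comm (f _)]

lemma dft_eq_zero_iff {N : ℕ} [NeZero N] {f : ZMod N → ℂ} {ω : ZMod N} :
    dft N f ω = 0 ↔ 𝓕 f ω = 0 := by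
  rw [dft_eq_cpow_mul, mul_eq_zero, cpow_eq_zero_iff, or_iff_right (not_and.2 fun h _ ↦
    (Nat.cast_ne_zero.2 (NeZero.ne N)) h)]

section Estimates

variable {ι : Type*} {s : Finset ι} {p l z : ι → ℂ}

lemma norm_sum_mul_conj_le {c : ℝ} (hp : ∀ t ∈ s, ‖p t‖ ≤ c) :
    ‖∑ t ∈ s, p t * conj (z t)‖ ≤ c * ∑ t ∈ s, ‖z t‖ := by
  rw [mul_sum]
  refine (norm_sum_le _ _).trans (sum_le_sum fun t ht ↦ ?_)
  rw [norm_mul, norm_conj]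
  exact mul_le_mul_of_nonneg_right (hp t ht) (norm_nonneg _)

lemma one_sub_mul_sum_norm_lt_norm_sum_mul_conj {α : ℝ} (hpl : ∀ t ∈ s, ‖p t - l t‖ < α)
    (hlz : ∀ t ∈ s, l t * conj (z t) = ‖z t‖) (hz : ∃ t ∈ s, z t ≠ 0) :
    (1 - α) * ∑ t ∈ s, ‖z t‖ < ‖∑ t ∈ s, p t * conj (z t)‖ := by
  have hsplit : ∑ t ∈ s, p t * conj (z t)
      = ((∑ t ∈ s, ‖z t‖ : ℝ) : ℂ) + ∑ t ∈ s, (p t - l t) * conj (z t) := by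
    rw [ofReal_sum, ← sum_add_distrib]
    exact sum_congr rfl fun t ht ↦ by rw [← hlz t ht]; ring
  have herr : ‖∑ t ∈ s, (p t - l t) * conj (z t)‖ < α * ∑ t ∈ s, ‖z t‖ := by
    obtain ⟨t₀, ht₀, hzt₀⟩ := hz
    rw [mul_sum]
    refine (norm_sum_le _ _).trans_lt (sum_lt_sum (fun t ht ↦ ?_) ⟨t₀, ht₀, ?_⟩)
    · rw [norm_mul, norm_conj]
      exact mul_le_mul_of_nonneg_right (hpl t ht).le (norm_nonneg _)
    · rw [norm_mul, norm_conj]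
      exact mul_lt_mul_of_pos_right (hpl t₀ ht₀) (norm_pos_iff.2 hzt₀)
  have hA : ‖((∑ t ∈ s, ‖z t‖ : ℝ) : ℂ)‖ = ∑ t ∈ s, ‖z t‖ :=
    Complex.norm_of_nonneg (sum_nonneg fun t _ ↦ norm_nonneg _)
  have := norm_sub_norm_le ((∑ t ∈ s, ‖z t‖ : ℝ) : ℂ) (-∑ t ∈ s, (p t - l t) * conj (z t))
  rw [sub_neg_eq_add, norm_neg, hA, ← hsplit] at this
  linarith

end Estimates

theorem stmt5_general (N : ℕ) [NeZero N] (S : Finset (ZMod N)) (Ω : Finset (ZMod N))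
    (α : ℝ) (hα : α ∈ Set.Ioo (0:ℝ) 1)
    (p l z : ZMod N → ℂ)
    (hp : ∀ ω, ω ∉ Ω → dft N p ω = 0)
    (hpl : ∀ t ∈ S, ‖p t - l t‖ < α)
    (hpc : ∀ t, t ∉ S → ‖p t‖ < 1 - α)
    (hz : ∀ ω ∈ Ω, dft N z ω = 0)
    (hlz : ∀ t ∈ S, l t * (starRingEnd ℂ) (z t) = (‖z t‖ : ℂ))
    (hznz : ∃ t ∈ S, z t ≠ 0) :
    (1 - α) * ∑ t ∈ S, ‖z t‖
        < ‖∑ t ∈ S, p t * (starRingEnd ℂ) (z t)‖ ∧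
    ‖∑ t ∈ Sᶜ, p t * (starRingEnd ℂ) (z t)‖
        ≤ (1 - α) * ∑ t ∈ Sᶜ, ‖z t‖ ∧
    ∑ t ∈ S, ‖z t‖ < ∑ t ∈ Sᶜ, ‖z t‖ := by
  have hS := one_sub_mul_sum_norm_lt_norm_sum_mul_conj hpl hlz hznz
  have hSc := norm_sum_mul_conj_le (s := Sᶜ) (z := z) fun t ht ↦ (hpc t (mem_compl.1 ht)).le
  have horth : ∑ t, p t * conj (z t) = 0 :=
    ZMod.sum_mul_conj_eq_zero_of_dft_eq_zero (Ω := Ω) (fun k hk ↦ dft_eq_zero_iff.1 (hp k hk))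
      fun k hk ↦ dft_eq_zero_iff.1 (hz k hk)
  have hnorm : ‖∑ t ∈ S, p t * conj (z t)‖ = ‖∑ t ∈ Sᶜ, p t * conj (z t)‖ := by
    rw [eq_neg_of_add_eq_zero_left ((sum_add_sum_compl S _).trans horth), norm_neg]
  refine ⟨hS, hSc, lt_of_mul_lt_mul_left ?_ (sub_pos.2 hα.2).le⟩
  exact hS.trans_le (hnorm ▸ hSc)

/-- The main estimate in (iii) ⇒ (ii): with `p̂` supported in `Ω`, `|p − λ| < α`
on `S`, `|p| < 1 − α` off `S`, and `z` with `ẑ|_Ω = 0`, `λ·conj z = |z|` on `S`,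
`z` not identically zero on `S`, one gets
`(1−α)∑_S|z| < |∑_S p·conj z|`, `|∑_{G∖S} p·conj z| ≤ (1−α)∑_{G∖S}|z|`,
and hence `∑_S|z| < ∑_{G∖S}|z|`. -/
theorem stmt5 (N : ℕ) [NeZero N] (S : Finset (ZMod N)) (Ω : Finset (ZMod N))
    (α : ℝ) (hα : α ∈ Set.Ioo (0:ℝ) 1)
    (p l z : ZMod N → ℂ)
    (hp : ∀ ω, ω ∉ Ω → dft N p ω = 0)
    (hl : ∀ t ∈ S, ‖l t‖ = 1)
    (hpl : ∀ t ∈ S, ‖p t - l t‖ < α)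
    (hpc : ∀ t, t ∉ S → ‖p t‖ < 1 - α)
    (hz : ∀ ω ∈ Ω, dft N z ω = 0)
    (hlz : ∀ t ∈ S, l t * (starRingEnd ℂ) (z t) = (‖z t‖ : ℂ))
    (hznz : ∃ t ∈ S, z t ≠ 0) :
    (1 - α) * ∑ t ∈ S, ‖z t‖
        < ‖∑ t ∈ S, p t * (starRingEnd ℂ) (z t)‖ ∧
    ‖∑ t ∈ Sᶜ, p t * (starRingEnd ℂ) (z t)‖
        ≤ (1 - α) * ∑ t ∈ Sᶜ, ‖z t‖ ∧
    ∑ t ∈ S, ‖z t‖ < ∑ t ∈ Sᶜ, ‖z t‖ :=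
  stmt5_general N S Ω α hα p l z hp hpl hpc hz hlz hznz
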